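/- Second-stage recovery of the latent conditional mean of the confounder from the negative control outcome (exact algebraic core of Theorem 2, stage for W): Let ε be a real random variable taking finitely many values that is independent of the triple (R, Z, X), let m : {0,1} × 𝒵 × 𝒳 → ℝ, and set U := m(R, Z, X) + ε. Let W be a nonnegative real random variable taking finitely many values, let c : 𝒳 → ℝ and b ∈ ℝ, and suppose E[ W | R = r, Z = z, X = x, ε = e ] = exp( c(x) + b·(m(r, z, x) + e) ) for every (r, z, x, e) with P(R = r, Z = z, X = x, ε = e) > 0. Then for every (r, z, x) with P(R = r, Z = z, X = x) > 0: E[ W | R = r, Z = z, X = x ] = κ·exp( c(x) + b·m(r, z, x) ), where κ := E[ exp(b·ε) ] > 0; in particular, if b ≠ 0, then m(r, z, x) = ( log E[ W | R = r, Z = z, X = x ] − log κ − c(x) )/b. -/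

import Mathlib

open Finset

noncomputable section

open scoped Classical

variable {Ω : Type*} [Fintype Ω]

/-- Probability of an event `A` under the weight function `p`. -/
def pr (p : Ω → ℝ) (A : Ω → Prop) : ℝ := ∑ ω, if A ω then p ω else 0

/-- Expectation of a real random variable `Y` under the weight function `p`. -/
def ex (p : Ω → ℝ) (Y : Ω → ℝ) : ℝ := ∑ ω, p ω * Y ω

/-- Conditional probability `P(A | B)`. -/
def cpr (p : Ω → ℝ) (A B : Ω → Prop) : ℝ := pr p (fun ω => A ω ∧ B ω) / pr p B

/-- Conditional expectation `E[Y | B]`. -/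
def cex (p : Ω → ℝ) (Y : Ω → ℝ) (B : Ω → Prop) : ℝ :=
  (∑ ω, if B ω then p ω * Y ω else 0) / pr p B

lemma ite_congr_inst {c d : Prop} {i1 : Decidable c} {i2 : Decidable d} (h : c ↔ d) (a b : ℝ) :
    @ite ℝ c i1 a b = @ite ℝ d i2 a b := by
  obtain rfl := propext h
  congr

lemma pr_congr (p : Ω → ℝ) (A A' : Ω → Prop) (h : ∀ ω, A ω ↔ A' ω) :
    pr p A = pr p A' := by
  unfold pr
  exact Finset.sum_congr rfl fun ω _ => if_congr (h ω) rfl rfl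

lemma pr_nonneg (p : Ω → ℝ) (hp : ∀ ω, 0 ≤ p ω) (A : Ω → Prop) : 0 ≤ pr p A :=
  Finset.sum_nonneg fun ω _ => by by_cases h : A ω <;> simp [h, hp ω]

lemma p_eq_zero_of_pr (p : Ω → ℝ) (hp : ∀ ω, 0 ≤ p ω) (A : Ω → Prop)
    (h0 : pr p A = 0) : ∀ ω, A ω → p ω = 0 := by
  intro ω hA
  have := (Finset.sum_eq_zero_iff_of_nonneg
    (fun ω _ => by by_cases h : A ω <;> simp [h, hp ω])).mp h0 ω (Finset.mem_univ ω)
  simpa [hA] using this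

/-- Second-stage recovery of the latent conditional mean of the confounder from the
negative control outcome (exact algebraic core of Theorem 2, stage for W). -/
theorem second_stage_recovery_W
    {𝒳 𝒵 : Type*} [Fintype 𝒳] [Fintype 𝒵]
    (p : Ω → ℝ) (hp : ∀ ω, 0 ≤ p ω) (hp1 : ∑ ω, p ω = 1)
    (R : Ω → Bool) (X : Ω → 𝒳) (Z : Ω → 𝒵)
    (eps : Ω → ℝ)
    -- ε is independent of (R, Z, X)
    (hindep : ∀ (e : ℝ) (r : Bool) (z : 𝒵) (x : 𝒳),
      pr p (fun ω => eps ω = e ∧ (R ω = r ∧ Z ω = z ∧ X ω = x))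
        = pr p (fun ω => eps ω = e) * pr p (fun ω => R ω = r ∧ Z ω = z ∧ X ω = x))
    (m : Bool → 𝒵 → 𝒳 → ℝ)
    (U : Ω → ℝ) (hU : ∀ ω, U ω = m (R ω) (Z ω) (X ω) + eps ω)
    (W : Ω → ℝ) (hW0 : ∀ ω, 0 ≤ W ω)
    (c : 𝒳 → ℝ) (b : ℝ)
    -- log-linear model for E[W | R, Z, X, ε]
    (hmodel : ∀ (r : Bool) (z : 𝒵) (x : 𝒳) (e : ℝ),
      0 < pr p (fun ω => R ω = r ∧ Z ω = z ∧ X ω = x ∧ eps ω = e) →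
      cex p W (fun ω => R ω = r ∧ Z ω = z ∧ X ω = x ∧ eps ω = e)
        = Real.exp (c x + b * (m r z x + e))) :
    0 < ex p (fun ω => Real.exp (b * eps ω)) ∧
    ∀ (r : Bool) (z : 𝒵) (x : 𝒳), 0 < pr p (fun ω => R ω = r ∧ Z ω = z ∧ X ω = x) →
      cex p W (fun ω => R ω = r ∧ Z ω = z ∧ X ω = x)
          = ex p (fun ω => Real.exp (b * eps ω)) * Real.exp (c x + b * m r z x)
        ∧ (b ≠ 0 → m r z x
            = (Real.log (cex p W (fun ω => R ω = r ∧ Z ω = z ∧ X ω = x))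
                - Real.log (ex p (fun ω => Real.exp (b * eps ω))) - c x) / b) := by
  classical
  set κ := ex p (fun ω => Real.exp (b * eps ω)) with hκdef
  set E := Finset.image eps Finset.univ with hE
  have hκsum : κ = ∑ e ∈ E, pr p (fun ω => eps ω = e) * Real.exp (b * e) := by
    rw [hκdef]
    unfold ex
    rw [← Finset.sum_fiberwise_of_maps_to
      (fun ω _ => Finset.mem_image_of_mem eps (Finset.mem_univ ω))
      (fun ω => p ω * Real.exp (b * eps ω))]
    refine Finset.sum_congr rfl fun e _ => ?_
    rw [Finset.sum_filter]
    unfold pr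
    rw [Finset.sum_mul]
    refine Finset.sum_congr rfl fun ω _ => ?_
    by_cases h : eps ω = e <;> simp [h]
  have hκpos : 0 < κ := by
    rw [hκdef]
    unfold ex
    have hx : ∃ ω : Ω, 0 < p ω := by
      by_contra h
      push_neg at h
      have h0 : ∑ ω, p ω = 0 :=
        Finset.sum_eq_zero fun ω _ => le_antisymm (h ω) (hp ω)
      rw [hp1] at h0; norm_num at h0
    obtain ⟨ω0, hω0⟩ := hx
    exact Finset.sum_pos' (fun ω _ => mul_nonneg (hp ω) (Real.exp_pos _).le)
      ⟨ω0, Finset.mem_univ _, mul_pos hω0 (Real.exp_pos _)⟩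
  refine ⟨hκpos, fun r z x hB => ?_⟩
  set B := fun ω => R ω = r ∧ Z ω = z ∧ X ω = x with hBdef
  have hBne : pr p B ≠ 0 := ne_of_gt hB
  have hS : (∑ ω, if B ω then p ω * W ω else 0)
      = pr p B * (κ * Real.exp (c x + b * m r z x)) := by
    have step1 : (∑ ω, if B ω then p ω * W ω else 0)
        = ∑ e ∈ E, ∑ ω, if B ω ∧ eps ω = e then p ω * W ω else 0 := by
      rw [← Finset.sum_fiberwise_of_maps_to
        (fun ω _ => Finset.mem_image_of_mem eps (Finset.mem_univ ω))
        (fun ω => if B ω then p ω * W ω else 0)]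
      refine Finset.sum_congr rfl fun e _ => ?_
      rw [Finset.sum_filter]
      refine Finset.sum_congr rfl fun ω _ => ?_
      by_cases h1 : B ω <;> by_cases h2 : eps ω = e <;> simp [h1, h2]
    have step2 : ∀ e ∈ E, (∑ ω, if B ω ∧ eps ω = e then p ω * W ω else 0)
        = pr p B * Real.exp (c x + b * m r z x)
          * (pr p (fun ω => eps ω = e) * Real.exp (b * e)) := by
      intro e _
      have hiff : ∀ ω, (B ω ∧ eps ω = e) ↔ (R ω = r ∧ Z ω = z ∧ X ω = x ∧ eps ω = e) := by
        intro ω; rw [hBdef]; tauto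
      have hpreq : pr p (fun ω => R ω = r ∧ Z ω = z ∧ X ω = x ∧ eps ω = e)
          = pr p (fun ω => eps ω = e) * pr p B := by
        rw [← hindep e r z x]
        exact pr_congr p _ _ (fun ω => by tauto)
      have hexp : Real.exp (c x + b * (m r z x + e))
          = Real.exp (c x + b * m r z x) * Real.exp (b * e) := by
        rw [← Real.exp_add]; ring_nf
      by_cases hpos : 0 < pr p (fun ω => R ω = r ∧ Z ω = z ∧ X ω = x ∧ eps ω = e)
      · have hm := hmodel r z x e hpos
        unfold cex at hm
        rw [div_eq_iff (ne_of_gt hpos)] at hm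
        have key : (∑ ω, if B ω ∧ eps ω = e then p ω * W ω else 0)
            = Real.exp (c x + b * (m r z x + e))
              * pr p (fun ω => R ω = r ∧ Z ω = z ∧ X ω = x ∧ eps ω = e) := by
          refine Eq.trans ?_ hm
          exact Finset.sum_congr rfl fun ω _ => ite_congr_inst (hiff ω) _ _
        rw [key, hpreq, hexp]; ring
      · have h0 : pr p (fun ω => R ω = r ∧ Z ω = z ∧ X ω = x ∧ eps ω = e) = 0 :=
          le_antisymm (not_lt.mp hpos) (pr_nonneg p hp _)
        have hz := p_eq_zero_of_pr p hp _ h0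
        have hL : (∑ ω, if B ω ∧ eps ω = e then p ω * W ω else 0) = 0 := by
          refine Finset.sum_eq_zero fun ω _ => ?_
          by_cases h1 : B ω ∧ eps ω = e
          · rw [if_pos h1, hz ω ((hiff ω).mp h1), zero_mul]
          · rw [if_neg h1]
        rw [hL]
        rw [hpreq] at h0
        rcases mul_eq_zero.mp h0 with h | h
        · rw [h]; ring
        · exact absurd h hBne
    calc (∑ ω, if B ω then p ω * W ω else 0)
        = ∑ e ∈ E, ∑ ω, if B ω ∧ eps ω = e then p ω * W ω else 0 := step1
      _ = ∑ e ∈ E, pr p B * Real.exp (c x + b * m r z x)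
            * (pr p (fun ω => eps ω = e) * Real.exp (b * e)) :=
          Finset.sum_congr rfl step2
      _ = pr p B * Real.exp (c x + b * m r z x)
            * ∑ e ∈ E, pr p (fun ω => eps ω = e) * Real.exp (b * e) := by
          rw [Finset.mul_sum]
      _ = pr p B * (κ * Real.exp (c x + b * m r z x)) := by rw [← hκsum]; ring
  have hcex : cex p W B = κ * Real.exp (c x + b * m r z x) := by
    unfold cex
    rw [div_eq_iff hBne, mul_comm (κ * Real.exp (c x + b * m r z x)) (pr p B)]
    refine Eq.trans ?_ hS
    exact Finset.sum_congr rfl fun ω _ => ite_congr_inst Iff.rfl _ _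
  refine ⟨hcex, fun hb => ?_⟩
  rw [hcex, Real.log_mul (ne_of_gt hκpos) (Real.exp_ne_zero _), Real.log_exp]
  field_simp
  ring
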